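/- arXiv:1003.4920 — 2 statements merged into one kernel-verified Lean document; each statement's English description precedes it below -/
import Mathlib

section
/- Let (γ_n) be a positive sequence with γ_n → 0 and ∑ γ_n = ∞. Fix n and set s_{n,k} = ∑_{i=0}^{k} γ_{n+i} (with s_{n,-1}=0). Let q, q̄ > 0. Then for every ε > 0 there exists T such that for all t ≥ T, ∑_{k=0}^{t} ∫_{s_{n,k-1}}^{s_{n,k}} e^{q(u - s_{n,t})} (e^{q̄ γ_{n+k}} - 1) du ≤ 2ε/q. -/
/-!
Each integral equals `(e^{q S_{k+1}} - e^{q S_k}) (e^{q̄ γ_{n+k}} - 1) / (q e^{q S_{t+1}})`, so the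
sum is `1/q` times a weighted average of the coefficients `c_k = e^{q̄ γ_{n+k}} - 1` with the
nonnegative weights `e^{q S_{k+1}} - e^{q S_k}`, normalised by `e^{q S_{t+1}}`. Since `∑ γ = ∞`
the normaliser tends to infinity, and since `c_k → 0` such averages tend to `0` (a Toeplitz
argument, here `Asymptotics.IsLittleO.sum_range`).
-/

open Filter Finset Asymptotics Real Topology

theorem integral_exp_mul_sub (q c a b : ℝ) (hq : q ≠ 0) :
    ∫ u in a..b, exp (q * (u - c)) = (exp (q * b) - exp (q * a)) / (q * exp (q * c)) := by
  simp_rw [mul_sub]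
  rw [intervalIntegral.integral_comp_mul_left (fun x => exp (x - q * c)) hq,
    intervalIntegral.integral_comp_sub_right, integral_exp, smul_eq_mul, exp_sub, exp_sub]
  field_simp

theorem tendsto_sum_mul_sub_div_of_tendsto_zero {a c : ℕ → ℝ} (ha : Monotone a)
    (ha_top : Tendsto a atTop atTop) (hc : Tendsto c atTop (𝓝 0)) :
    Tendsto (fun N => (∑ k ∈ range N, c k * (a (k + 1) - a k)) / a N) atTop (𝓝 0) := by
  have htele : ∀ N, ∑ k ∈ range N, (a (k + 1) - a k) = a N - a 0 := sum_range_sub a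
  have hsum : (fun N => ∑ k ∈ range N, c k * (a (k + 1) - a k)) =o[atTop]
      fun N => a N - a 0 := by
    have := ((isLittleO_one_iff ℝ).2 hc).mul_isBigO (isBigO_refl (fun k => a (k + 1) - a k) atTop)
    simp only [one_mul] at this
    simpa only [htele] using this.sum_range (fun k => sub_nonneg.2 (ha k.le_succ))
      (by simpa only [htele, ← sub_eq_add_neg] using
        tendsto_atTop_add_const_right _ (-a 0) ha_top)
  have hconst : (fun _ : ℕ => a 0) =O[atTop] a :=
    (isLittleO_const_left.2 (Or.inr (tendsto_norm_atTop_atTop.comp ha_top))).isBigO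
  exact (hsum.trans_isBigO ((isBigO_refl a atTop).sub hconst)).tendsto_div_nhds_zero

theorem monotone_sum_range_of_nonneg {f : ℕ → ℝ} (hf : ∀ i, 0 ≤ f i) :
    Monotone fun N => ∑ i ∈ range N, f i :=
  monotone_nat_of_le_succ fun N => by
    rw [sum_range_succ]
    linarith [hf N]

theorem tendsto_sum_range_add_atTop {f : ℕ → ℝ}
    (hf : Tendsto (fun N => ∑ i ∈ range N, f i) atTop atTop) (n : ℕ) :
    Tendsto (fun N => ∑ i ∈ range N, f (n + i)) atTop atTop := by
  refine (tendsto_atTop_add_const_right _ (-∑ i ∈ range n, f i)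
    ((tendsto_add_atTop_iff_nat n).2 hf)).congr fun N => ?_
  rw [add_comm N n, sum_range_add]
  ring

theorem stmt0_general (γ : ℕ → ℝ) (hpos : ∀ k, 0 < γ k)
    (hγ0 : Tendsto γ atTop (nhds 0))
    (hdiv : Tendsto (fun m => ∑ i ∈ Finset.range m, γ i) atTop atTop)
    (n : ℕ) (S : ℕ → ℝ) (hS : ∀ k, S k = ∑ i ∈ Finset.range k, γ (n + i))
    (q qbar : ℝ) (hq : 0 < q) :
    ∀ ε > 0, ∃ T : ℕ, ∀ t ≥ T,
      (∑ k ∈ Finset.range (t + 1),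
        ∫ u in (S k)..(S (k + 1)),
          Real.exp (q * (u - S (t + 1))) * (Real.exp (qbar * γ (n + k)) - 1))
      ≤ 2 * ε / q := by
  intro ε hε
  have hS' : S = fun N => ∑ i ∈ range N, γ (n + i) := funext hS
  have hS_mono : Monotone S := hS' ▸ monotone_sum_range_of_nonneg fun i => (hpos (n + i)).le
  have hS_top : Tendsto S atTop atTop := hS' ▸ tendsto_sum_range_add_atTop hdiv n
  have hc : Tendsto (fun k => exp (qbar * γ (n + k)) - 1) atTop (𝓝 0) := by
    have hγn : Tendsto (fun k => γ (n + k)) atTop (𝓝 0) := by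
      simpa only [add_comm n] using (tendsto_add_atTop_iff_nat n).2 hγ0
    simpa using ((continuous_exp.comp (continuous_const_mul qbar)).tendsto 0).comp hγn |>.sub_const 1
  have hratio := tendsto_sum_mul_sub_div_of_tendsto_zero (c := fun k => exp (qbar * γ (n + k)) - 1)
    (fun _ _ h => exp_le_exp.2 (mul_le_mul_of_nonneg_left (hS_mono h) hq.le))
    (tendsto_exp_atTop.comp (hS_top.const_mul_atTop hq)) hc
  obtain ⟨T, hT⟩ := eventually_atTop.1
    ((hratio.comp (tendsto_add_atTop_nat 1)).eventually (ge_mem_nhds (by linarith : 0 < 2 * ε)))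
  refine ⟨T, fun t ht => ?_⟩
  calc _ = (∑ k ∈ range (t + 1), (exp (qbar * γ (n + k)) - 1) *
          (exp (q * S (k + 1)) - exp (q * S k))) / exp (q * S (t + 1)) / q := by
        rw [sum_div, sum_div]
        refine sum_congr rfl fun k _ => ?_
        rw [intervalIntegral.integral_mul_const, integral_exp_mul_sub _ _ _ _ hq.ne']
        field_simp
    _ ≤ 2 * ε / q := div_le_div_of_nonneg_right (hT t ht) hq.le

/-- Step 2 of Proposition A.1: the discrete exponential Riemann sum error bound.
Here `S k = s_{n,k-1}` (so `S 0 = 0` and `S (k+1) = s_{n,k} = ∑_{i=0}^k γ_{n+i}`). -/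
theorem stmt0 (γ : ℕ → ℝ) (hpos : ∀ k, 0 < γ k)
    (hγ0 : Tendsto γ atTop (nhds 0))
    (hdiv : Tendsto (fun m => ∑ i ∈ Finset.range m, γ i) atTop atTop)
    (n : ℕ) (S : ℕ → ℝ) (hS : ∀ k, S k = ∑ i ∈ Finset.range k, γ (n + i))
    (q qbar : ℝ) (hq : 0 < q) (hqbar : 0 < qbar) :
    ∀ ε > 0, ∃ T : ℕ, ∀ t ≥ T,
      (∑ k ∈ Finset.range (t + 1),
        ∫ u in (S k)..(S (k + 1)),
          Real.exp (q * (u - S (t + 1))) * (Real.exp (qbar * γ (n + k)) - 1))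
      ≤ 2 * ε / q :=
  stmt0_general γ hpos hγ0 hdiv n S hS q qbar hq
end

section
/- Let Q be a positive definite symmetric d×d matrix, Σ a symmetric positive semidefinite d×d matrix, and (γ_n) a positive sequence decreasing to 0 with ∑ γ_n = ∞. For fixed n set s_{n,k} = ∑_{i=0}^{k} γ_{n+i}. Then the series V_n = ∑_{k=0}^{∞} γ_{n+k} e^{-Q s_{n,k}} Σ e^{-Q s_{n,k}} converges, and V_n → ∫_0^∞ e^{-Qt} Σ e^{-Qt} dt as n → ∞. -/
open MeasureTheory Matrix Filter Finset

attribute [local instance] Matrix.normedAddCommGroup Matrix.normedSpace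

/-!
Diagonalising `Q = U diag(λ) Uᵀ` gives `e^{-tQ} S e^{-tQ} = ∑_{i,j} e^{-t(λᵢ+λⱼ)} Cᵢⱼ` with
`λᵢ + λⱼ > 0`, so the series and the integral are the same finite combination of the scalar
quantities `∑ₖ γ_{n+k} e^{-m s_{n,k}}` and `∫₀^∞ e^{-mt} dt = 1/m`. For the scalar series, the
increments `e^{-m s_{n,k-1}} - e^{-m s_{n,k}}` (with `s_{n,-1} = 0`) telescope to `1` and, since
`x ≤ eˣ - 1 ≤ x eˣ`, lie between `m γ_{n+k} e^{-m s_{n,k}}` and `e^{m γ_n}` times that; hence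
`e^{-m γ_n} / m ≤ ∑ₖ γ_{n+k} e^{-m s_{n,k}} ≤ 1 / m`, and `γ_n → 0` squeezes the sum to `1 / m`.
-/

namespace Real

theorem mul_exp_le_exp_add_sub_exp (x y : ℝ) : x * exp y ≤ exp (x + y) - exp y := by
  rw [exp_add]
  nlinarith [add_one_le_exp x, exp_pos y]

theorem exp_add_sub_exp_le_mul_exp (x y : ℝ) : exp (x + y) - exp y ≤ x * exp (x + y) := by
  have h : exp y = exp (-x) * exp (x + y) := by rw [← exp_add]; ring_nf
  have := mul_le_mul_of_nonneg_right (one_sub_le_exp_neg x) (exp_pos (x + y)).le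
  linarith

end Real

open Real

section RiemannSum

variable {g : ℕ → ℝ} {m c : ℝ}

private theorem hasSum_exp_neg_partialSum_sub (hm : 0 < m) (hg : ∀ k, 0 ≤ g k)
    (htop : Tendsto (fun k => ∑ i ∈ range k, g i) atTop atTop) :
    HasSum (fun k => exp (-((∑ i ∈ range k, g i) * m))
      - exp (-((∑ i ∈ range (k + 1), g i) * m))) 1 := by
  have hnonneg : ∀ k, 0 ≤ exp (-((∑ i ∈ range k, g i) * m))
      - exp (-((∑ i ∈ range (k + 1), g i) * m)) := fun k => by
    rw [sub_nonneg, exp_le_exp, sum_range_succ]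
    nlinarith [hg k]
  rw [hasSum_iff_tendsto_nat_of_nonneg hnonneg]
  have hlim : Tendsto (fun N => exp (-((∑ i ∈ range N, g i) * m))) atTop (nhds 0) :=
    tendsto_exp_atBot.comp (tendsto_neg_atTop_atBot.comp (htop.atTop_mul_const hm))
  have h1 : Tendsto (fun N => 1 - exp (-((∑ i ∈ range N, g i) * m))) atTop (nhds 1) := by
    simpa using (tendsto_const_nhds (x := (1 : ℝ))).sub hlim
  refine h1.congr fun N => ?_
  rw [sum_range_sub' (fun k => exp (-((∑ i ∈ range k, g i) * m)))]
  simp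

private theorem mul_le_exp_neg_partialSum_sub (g : ℕ → ℝ) (m : ℝ) (k : ℕ) :
    m * (g k * exp (-((∑ i ∈ range (k + 1), g i) * m))) ≤
      exp (-((∑ i ∈ range k, g i) * m)) - exp (-((∑ i ∈ range (k + 1), g i) * m)) := by
  have h := mul_exp_le_exp_add_sub_exp (g k * m) (-((∑ i ∈ range (k + 1), g i) * m))
  rw [show g k * m + -((∑ i ∈ range (k + 1), g i) * m) = -((∑ i ∈ range k, g i) * m) by
    rw [sum_range_succ]; ring] at h
  linarith

private theorem exp_neg_partialSum_sub_le (hm : 0 < m) (hg : ∀ k, 0 ≤ g k)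
    (hgc : ∀ k, g k ≤ c) (k : ℕ) :
    exp (-((∑ i ∈ range k, g i) * m)) - exp (-((∑ i ∈ range (k + 1), g i) * m)) ≤
      exp (c * m) * (m * (g k * exp (-((∑ i ∈ range (k + 1), g i) * m)))) := by
  set y := -((∑ i ∈ range (k + 1), g i) * m) with hy
  have hx : 0 ≤ g k * m := mul_nonneg (hg k) hm.le
  have hmesh : exp (g k * m) ≤ exp (c * m) := exp_le_exp.2 (by nlinarith [hgc k])
  calc exp (-((∑ i ∈ range k, g i) * m)) - exp y = exp (g k * m + y) - exp y := by
        rw [hy, sum_range_succ]; ring_nf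
    _ ≤ g k * m * exp (g k * m + y) := exp_add_sub_exp_le_mul_exp _ _
    _ = g k * m * exp y * exp (g k * m) := by rw [exp_add]; ring
    _ ≤ g k * m * exp y * exp (c * m) := by gcongr
    _ = exp (c * m) * (m * (g k * exp y)) := by ring

theorem summable_mul_exp_neg_partialSum (hm : 0 < m) (hg : ∀ k, 0 ≤ g k)
    (htop : Tendsto (fun k => ∑ i ∈ range k, g i) atTop atTop) :
    Summable fun k => g k * exp (-((∑ i ∈ range (k + 1), g i) * m)) :=
  ((hasSum_exp_neg_partialSum_sub hm hg htop).summable.div_const m).of_nonneg_of_le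
    (fun k => mul_nonneg (hg k) (exp_pos _).le)
    (fun k => (le_div_iff₀' hm).2 (mul_le_exp_neg_partialSum_sub g m k))

theorem tsum_mul_exp_neg_partialSum_le (hm : 0 < m) (hg : ∀ k, 0 ≤ g k)
    (htop : Tendsto (fun k => ∑ i ∈ range k, g i) atTop atTop) :
    ∑' k, g k * exp (-((∑ i ∈ range (k + 1), g i) * m)) ≤ 1 / m := by
  rw [le_div_iff₀' hm, ← tsum_mul_left, ← (hasSum_exp_neg_partialSum_sub hm hg htop).tsum_eq]
  exact ((summable_mul_exp_neg_partialSum hm hg htop).mul_left m).tsum_le_tsum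
    (mul_le_exp_neg_partialSum_sub g m) (hasSum_exp_neg_partialSum_sub hm hg htop).summable

theorem exp_neg_div_le_tsum_mul_exp_neg_partialSum (hm : 0 < m) (hg : ∀ k, 0 ≤ g k)
    (hgc : ∀ k, g k ≤ c) (htop : Tendsto (fun k => ∑ i ∈ range k, g i) atTop atTop) :
    exp (-(c * m)) / m ≤ ∑' k, g k * exp (-((∑ i ∈ range (k + 1), g i) * m)) := by
  have h : 1 ≤ exp (c * m) * (m * ∑' k, g k * exp (-((∑ i ∈ range (k + 1), g i) * m))) := by
    have htel := hasSum_exp_neg_partialSum_sub hm hg htop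
    rw [← tsum_mul_left, ← tsum_mul_left, ← htel.tsum_eq]
    exact htel.summable.tsum_le_tsum
      (exp_neg_partialSum_sub_le hm hg hgc)
      (((summable_mul_exp_neg_partialSum hm hg htop).mul_left m).mul_left _)
  rw [exp_neg, div_le_iff₀ hm, inv_le_iff_one_le_mul₀ (exp_pos _)]
  linarith

end RiemannSum

theorem tendsto_sum_range_shift_atTop {γ : ℕ → ℝ}
    (hdiv : Tendsto (fun k => ∑ i ∈ range k, γ i) atTop atTop) (n : ℕ) :
    Tendsto (fun k => ∑ i ∈ range k, γ (n + i)) atTop atTop := by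
  have h : Tendsto (fun k => ∑ i ∈ range (n + k), γ i) atTop atTop :=
    hdiv.comp (tendsto_add_atTop_nat n |>.congr fun k => add_comm k n)
  refine (tendsto_atTop_add_const_left atTop (-∑ i ∈ range n, γ i) h).congr fun k => ?_
  rw [sum_range_add]
  ring

theorem tendsto_tsum_mul_exp_neg_partialSum_shift {γ : ℕ → ℝ} {m : ℝ} (hm : 0 < m)
    (hnonneg : ∀ k, 0 ≤ γ k) (hanti : Antitone γ) (hγ0 : Tendsto γ atTop (nhds 0))
    (hdiv : Tendsto (fun k => ∑ i ∈ range k, γ i) atTop atTop) :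
    Tendsto (fun n => ∑' k, γ (n + k) * exp (-((∑ i ∈ range (k + 1), γ (n + i)) * m)))
      atTop (nhds (1 / m)) := by
  have hlower : Tendsto (fun n => exp (-(γ n * m)) / m) atTop (nhds (1 / m)) := by
    have h : Tendsto (fun n => -(γ n * m)) atTop (nhds 0) := by
      simpa using (hγ0.mul_const m).neg
    simpa using ((continuous_exp.tendsto 0).comp h).div_const m
  exact tendsto_of_tendsto_of_tendsto_of_le_of_le hlower tendsto_const_nhds
    (fun n => exp_neg_div_le_tsum_mul_exp_neg_partialSum hm (fun k => hnonneg _)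
      (fun k => hanti (Nat.le_add_right n k)) (tendsto_sum_range_shift_atTop hdiv n))
    (fun n => tsum_mul_exp_neg_partialSum_le hm (fun k => hnonneg _)
      (tendsto_sum_range_shift_atTop hdiv n))

theorem integral_Ioi_exp_neg_mul {m : ℝ} (hm : 0 < m) :
    ∫ t in Set.Ioi (0 : ℝ), exp (-(t * m)) = 1 / m := by
  have h := integral_exp_mul_Ioi (neg_lt_zero.2 hm) 0
  simp only [mul_zero, exp_zero, neg_mul] at h
  simp_rw [mul_comm _ m, h]
  field_simp

section ExpSum

variable {ι E : Type*} [Fintype ι] [NormedAddCommGroup E] [NormedSpace ℝ E]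
  {F : ℝ → E} {μ : ι → ℝ} {C : ι → E} {γ : ℕ → ℝ}

private theorem smul_eq_sum_mul_exp_smul (hF : ∀ t, F t = ∑ p, exp (-(t * μ p)) • C p)
    (a t : ℝ) : a • F t = ∑ p, (a * exp (-(t * μ p))) • C p := by
  simp only [hF, smul_sum, smul_smul]

theorem summable_smul_of_eq_sum_exp (hμ : ∀ p, 0 < μ p)
    (hF : ∀ t, F t = ∑ p, exp (-(t * μ p)) • C p) (hnonneg : ∀ k, 0 ≤ γ k)
    (hdiv : Tendsto (fun k => ∑ i ∈ range k, γ i) atTop atTop) (n : ℕ) :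
    Summable fun k => γ (n + k) • F (∑ i ∈ range (k + 1), γ (n + i)) := by
  simp_rw [smul_eq_sum_mul_exp_smul hF]
  exact summable_sum fun p _ => (summable_mul_exp_neg_partialSum (hμ p) (fun k => hnonneg _)
    (tendsto_sum_range_shift_atTop hdiv n)).smul_const (C p)

theorem integral_Ioi_of_eq_sum_exp [CompleteSpace E] (hμ : ∀ p, 0 < μ p)
    (hF : ∀ t, F t = ∑ p, exp (-(t * μ p)) • C p) :
    ∫ t in Set.Ioi (0 : ℝ), F t = ∑ p, (1 / μ p) • C p := by
  simp_rw [hF]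
  rw [integral_finsetSum _ fun p _ =>
    ((integrableOn_exp_mul_Ioi (neg_lt_zero.2 (hμ p)) 0).congr_fun
      (fun t _ => by ring_nf) measurableSet_Ioi).smul_const (C p)]
  simp_rw [integral_smul_const, integral_Ioi_exp_neg_mul (hμ _)]

theorem tendsto_tsum_smul_of_eq_sum_exp [CompleteSpace E] (hμ : ∀ p, 0 < μ p)
    (hF : ∀ t, F t = ∑ p, exp (-(t * μ p)) • C p) (hnonneg : ∀ k, 0 ≤ γ k)
    (hanti : Antitone γ) (hγ0 : Tendsto γ atTop (nhds 0))
    (hdiv : Tendsto (fun k => ∑ i ∈ range k, γ i) atTop atTop) :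
    Tendsto (fun n => ∑' k, γ (n + k) • F (∑ i ∈ range (k + 1), γ (n + i)))
      atTop (nhds (∫ t in Set.Ioi (0 : ℝ), F t)) := by
  have hsum : ∀ n, ∑' k, γ (n + k) • F (∑ i ∈ range (k + 1), γ (n + i)) = ∑ p,
      (∑' k, γ (n + k) * exp (-((∑ i ∈ range (k + 1), γ (n + i)) * μ p))) • C p := by
    intro n
    simp_rw [smul_eq_sum_mul_exp_smul hF]
    have hp : ∀ p, Summable fun k =>
        γ (n + k) * exp (-((∑ i ∈ range (k + 1), γ (n + i)) * μ p)) := fun p =>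
      summable_mul_exp_neg_partialSum (hμ p) (fun k => hnonneg _)
        (tendsto_sum_range_shift_atTop hdiv n)
    rw [Summable.tsum_finsetSum fun p _ => (hp p).smul_const (C p)]
    exact sum_congr rfl fun p _ => (hp p).tsum_smul_const (C p)
  simp_rw [hsum, integral_Ioi_of_eq_sum_exp hμ hF]
  exact tendsto_finsetSum _ fun p _ =>
    (tendsto_tsum_mul_exp_neg_partialSum_shift (hμ p) hnonneg hanti hγ0 hdiv).smul_const (C p)

end ExpSum

namespace Matrix

variable {n : Type*} [Fintype n] [DecidableEq n]

theorem diagonal_mul_mul_diagonal_eq_sum_single {R : Type*} [CommSemiring R] (a b : n → R)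
    (B : Matrix n n R) :
    diagonal a * B * diagonal b = ∑ p : n × n, single p.1 p.2 (a p.1 * B p.1 p.2 * b p.2) := by
  rw [matrix_eq_sum_single (diagonal a * B * diagonal b), ← Fintype.sum_prod_type']
  simp [mul_diagonal, diagonal_mul]

theorem IsHermitian.exp_neg_smul {Q : Matrix n n ℝ} (hQ : Q.IsHermitian) (t : ℝ) :
    NormedSpace.exp (-(t • Q)) = (hQ.eigenvectorUnitary : Matrix n n ℝ) *
      diagonal (fun i => Real.exp (-(t * hQ.eigenvalues i))) *
      star (hQ.eigenvectorUnitary : Matrix n n ℝ) := by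
  set U : unitary (Matrix n n ℝ) := hQ.eigenvectorUnitary
  have hspec : Q = (U : Matrix n n ℝ) * diagonal hQ.eigenvalues * star (U : Matrix n n ℝ) := by
    simpa [RCLike.ofReal_real_eq_id] using hQ.spectral_theorem
  have hconj : -(t • Q) = (U : Matrix n n ℝ) *
      diagonal (fun i => -(t * hQ.eigenvalues i)) * star (U : Matrix n n ℝ) := by
    conv_lhs => rw [hspec]
    rw [show diagonal (fun i => -(t * hQ.eigenvalues i)) = -(t • diagonal hQ.eigenvalues) by
      rw [← diagonal_smul, ← diagonal_neg]; rfl]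
    simp only [Matrix.mul_neg, Matrix.neg_mul, Matrix.mul_smul, Matrix.smul_mul]
  have h : NormedSpace.exp ((U : Matrix n n ℝ) * diagonal (fun i => -(t * hQ.eigenvalues i)) *
      star (U : Matrix n n ℝ)) = (U : Matrix n n ℝ) *
      NormedSpace.exp (diagonal (fun i => -(t * hQ.eigenvalues i))) * star (U : Matrix n n ℝ) :=
    -- the unit `Unitary.toUnits U` and its inverse coerce to `U` and `star U` definitionally
    exp_units_conj (Unitary.toUnits U) _
  rw [hconj, h, exp_diagonal]
  congr 2
  ext i
  rw [Pi.exp_def, Real.exp_eq_exp_ℝ]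

theorem IsHermitian.exp_neg_smul_mul_mul_exp_neg_smul {Q : Matrix n n ℝ} (hQ : Q.IsHermitian)
    (S : Matrix n n ℝ) (t : ℝ) :
    NormedSpace.exp (-(t • Q)) * S * NormedSpace.exp (-(t • Q)) =
      ∑ p : n × n, Real.exp (-(t * (hQ.eigenvalues p.1 + hQ.eigenvalues p.2))) •
        ((hQ.eigenvectorUnitary : Matrix n n ℝ) *
          single p.1 p.2 ((star (hQ.eigenvectorUnitary : Matrix n n ℝ) * S *
            (hQ.eigenvectorUnitary : Matrix n n ℝ)) p.1 p.2) *
          star (hQ.eigenvectorUnitary : Matrix n n ℝ)) := by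
  set U : Matrix n n ℝ := (hQ.eigenvectorUnitary : Matrix n n ℝ)
  set D := diagonal fun i => Real.exp (-(t * hQ.eigenvalues i))
  calc NormedSpace.exp (-(t • Q)) * S * NormedSpace.exp (-(t • Q))
      = U * (D * (star U * S * U) * D) * star U := by
        simp only [hQ.exp_neg_smul, U, D, Matrix.mul_assoc]
    _ = _ := by
        rw [diagonal_mul_mul_diagonal_eq_sum_single, Matrix.mul_sum, Matrix.sum_mul]
        refine sum_congr rfl fun p _ => ?_
        rw [← smul_mul_assoc, ← Matrix.mul_smul, smul_single, smul_eq_mul, mul_add, neg_add,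
          Real.exp_add]
        congr 3
        ring

end Matrix

theorem stmt9_general (d : ℕ) (Q S : Matrix (Fin d) (Fin d) ℝ)
    (hQ : Q.PosDef)
    (γ : ℕ → ℝ) (hpos : ∀ k, 0 < γ k) (hdec : ∀ k, γ (k + 1) ≤ γ k)
    (hγ0 : Tendsto γ atTop (nhds 0))
    (hdiv : Tendsto (fun m => ∑ i ∈ Finset.range m, γ i) atTop atTop)
    (s : ℕ → ℕ → ℝ) (hs : ∀ n k, s n k = ∑ i ∈ Finset.range (k + 1), γ (n + i)) :
    (∀ n : ℕ, Summable fun k : ℕ =>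
      γ (n + k) • (NormedSpace.exp (-(s n k • Q)) * S * NormedSpace.exp (-(s n k • Q)))) ∧
    Tendsto (fun n : ℕ => ∑' k : ℕ,
        γ (n + k) • (NormedSpace.exp (-(s n k • Q)) * S * NormedSpace.exp (-(s n k • Q))))
      atTop
      (nhds (∫ t in Set.Ioi (0 : ℝ),
        NormedSpace.exp (-(t • Q)) * S * NormedSpace.exp (-(t • Q)))) := by
  have hμ : ∀ p : Fin d × Fin d, 0 < hQ.1.eigenvalues p.1 + hQ.1.eigenvalues p.2 :=
    fun p => add_pos (hQ.eigenvalues_pos p.1) (hQ.eigenvalues_pos p.2)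
  have hF := hQ.1.exp_neg_smul_mul_mul_exp_neg_smul S
  have hnonneg : ∀ k, 0 ≤ γ k := fun k => (hpos k).le
  simp only [hs]
  exact ⟨fun n => summable_smul_of_eq_sum_exp hμ hF hnonneg hdiv n,
    tendsto_tsum_smul_of_eq_sum_exp hμ hF hnonneg (antitone_nat_of_succ_le hdec) hγ0 hdiv⟩

/-- Lemma 3.3's limiting covariance: the series `V_n = ∑_k γ_{n+k} e^{-Q s_{n,k}} Σ e^{-Q s_{n,k}}`
converges and tends, as `n → ∞`, to `∫_0^∞ e^{-Qt} Σ e^{-Qt} dt`. -/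
theorem stmt9 (d : ℕ) (Q S : Matrix (Fin d) (Fin d) ℝ)
    (hQ : Q.PosDef) (hQs : Q.IsSymm) (hS : S.PosSemidef) (hSs : S.IsSymm)
    (γ : ℕ → ℝ) (hpos : ∀ k, 0 < γ k) (hdec : ∀ k, γ (k + 1) ≤ γ k)
    (hγ0 : Tendsto γ atTop (nhds 0))
    (hdiv : Tendsto (fun m => ∑ i ∈ Finset.range m, γ i) atTop atTop)
    (s : ℕ → ℕ → ℝ) (hs : ∀ n k, s n k = ∑ i ∈ Finset.range (k + 1), γ (n + i)) :
    (∀ n : ℕ, Summable fun k : ℕ =>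
      γ (n + k) • (NormedSpace.exp (-(s n k • Q)) * S * NormedSpace.exp (-(s n k • Q)))) ∧
    Tendsto (fun n : ℕ => ∑' k : ℕ,
        γ (n + k) • (NormedSpace.exp (-(s n k • Q)) * S * NormedSpace.exp (-(s n k • Q))))
      atTop
      (nhds (∫ t in Set.Ioi (0 : ℝ),
        NormedSpace.exp (-(t • Q)) * S * NormedSpace.exp (-(t • Q)))) :=
  stmt9_general d Q S hQ γ hpos hdec hγ0 hdiv s hs
end
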